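/- Assume a₁ < 0, σ > −1 + 2/n (case (iv), so that T₁ = T₀ > 0) and λ ≥ 0. Then for any Y₀, Y₁ ∈ ℝⁿ the Cauchy problem D_t²Y(t) + A(t)Y(t) + λ|Y(t)|^{p−1}Y(t) = 0, Y(0) = Y₀, D_tY(0) = Y₁, has a global solution, i.e., a C¹ solution defined on the whole interval [0,T₀). -/

import Mathlib

/-!
For `σ ≠ -1` the scale function is the power `a₀ (1 + c t)^(2/ν)` with `ν = n(1+σ)` and
`c = ν a₁ / (2 a₀)`, and a direct computation gives `A(t) = 2(ν - 2)c² / (ν² (1 + c t)²)` on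
`[0, T₀) = {1 + c t > 0}`. In case (iv) `ν > 2` and `c < 0`, so `A` is positive and nondecreasing.

For the first-order system in `(Y, Y')` the energy `e = |Y'|² + A|Y|² + 2λ|Y|^(p+1)/(p+1)`
satisfies `e' = A'|Y|²`, hence `(e/A)' = A'(A|Y|² - e)/A² ≤ 0`: every solution stays in a fixed
ball on `[0, T]` for each `T < T₀`. The nonlinearity is locally Lipschitz, so Picard–Lindelöf with
a step length uniform on that ball continues local solutions up to every `T < T₀`, and uniqueness
glues them into one solution on `[0, T₀)`.
-/

open Set

/-- The scale function `a(t)` of the homogeneous and isotropic spacetime. -/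
noncomputable def scaleFun (n : ℕ) (σ a₀ a₁ : ℝ) (t : ℝ) : ℝ :=
  if σ = -1 then a₀ * Real.exp (a₁ * t / a₀)
  else a₀ * (1 + (n : ℝ) * (1 + σ) * a₁ * t / (2 * a₀)) ^ (2 / ((n : ℝ) * (1 + σ)))

/-- `q₀(t) = (d/dt)(a(t)²) / a(t)²`. -/
noncomputable def q0Fun (n : ℕ) (σ a₀ a₁ : ℝ) (t : ℝ) : ℝ :=
  deriv (fun s => (scaleFun n σ a₀ a₁ s) ^ 2) t / (scaleFun n σ a₀ a₁ t) ^ 2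

/-- `A(t) = -q₀(t)²/4 - (1/2) (d/dt) q₀(t)`. -/
noncomputable def AFun (n : ℕ) (σ a₀ a₁ : ℝ) (t : ℝ) : ℝ :=
  -(q0Fun n σ a₀ a₁ t) ^ 2 / 4 - (1 / 2) * deriv (q0Fun n σ a₀ a₁) t

open Metric Topology
open scoped NNReal

lemma rpow_sub_rpow_mul_le {q x y : ℝ} (hq : 0 ≤ q) (hy : 0 ≤ y) (hyx : y ≤ x) :
    (x ^ q - y ^ q) * y ≤ q * x ^ q * (x - y) := by
  rcases hy.eq_or_lt with rfl | hy
  · simpa using mul_nonneg (mul_nonneg hq (Real.rpow_nonneg hyx q)) hyx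
  rcases hyx.eq_or_lt with rfl | hyx
  · simp
  have hx : 0 < x := hy.trans hyx
  obtain ⟨c, hc, hslope⟩ := exists_hasDerivAt_eq_slope (fun z => z ^ q)
    (fun z => q * z ^ (q - 1)) hyx
    ((continuousOn_id.rpow_const fun z hz => Or.inl (hy.trans_le hz.1).ne'))
    (fun z hz => Real.hasDerivAt_rpow_const (Or.inl (hy.trans hz.1).ne'))
  have hc0 : 0 < c := hy.trans hc.1
  rw [eq_div_iff (sub_ne_zero.2 hyx.ne')] at hslope
  have key : c ^ (q - 1) * y ≤ x ^ q := by
    rcases le_total 1 q with h1q | hq1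
    · calc c ^ (q - 1) * y ≤ x ^ (q - 1) * x := mul_le_mul
            (Real.rpow_le_rpow hc0.le hc.2.le (by linarith)) hyx.le hy.le (by positivity)
        _ = x ^ q := by rw [← Real.rpow_add_one hx.ne']; ring_nf
    · calc c ^ (q - 1) * y ≤ y ^ (q - 1) * y := mul_le_mul_of_nonneg_right
            (Real.rpow_le_rpow_of_nonpos hy hc.1.le (by linarith)) hy.le
        _ = y ^ q := by rw [← Real.rpow_add_one hy.ne']; ring_nf
        _ ≤ x ^ q := Real.rpow_le_rpow hy.le hyx.le hq
  rw [← hslope]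
  nlinarith [mul_le_mul_of_nonneg_left key hq, sub_pos.2 hyx]

section RpowSMul

variable {E : Type*} [NormedAddCommGroup E] [NormedSpace ℝ E]

lemma norm_rpow_smul_sub_rpow_smul_le_of_norm_le {q : ℝ} (hq : 0 ≤ q) {a b : E}
    (hba : ‖b‖ ≤ ‖a‖) :
    ‖‖a‖ ^ q • a - ‖b‖ ^ q • b‖ ≤ (1 + q) * ‖a‖ ^ q * ‖a - b‖ := by
  have hmono : ‖b‖ ^ q ≤ ‖a‖ ^ q := Real.rpow_le_rpow (norm_nonneg b) hba hq
  calc ‖‖a‖ ^ q • a - ‖b‖ ^ q • b‖ = ‖‖a‖ ^ q • (a - b) + (‖a‖ ^ q - ‖b‖ ^ q) • b‖ := by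
        congr 1; rw [smul_sub, sub_smul]; abel
    _ ≤ ‖a‖ ^ q * ‖a - b‖ + (‖a‖ ^ q - ‖b‖ ^ q) * ‖b‖ := by
        refine (norm_add_le _ _).trans_eq ?_
        rw [norm_smul, norm_smul, Real.norm_of_nonneg (by positivity),
          Real.norm_of_nonneg (sub_nonneg.2 hmono)]
    _ ≤ ‖a‖ ^ q * ‖a - b‖ + q * ‖a‖ ^ q * ‖a - b‖ := by
        have h := rpow_sub_rpow_mul_le hq (norm_nonneg b) hba
        have : q * ‖a‖ ^ q * (‖a‖ - ‖b‖) ≤ q * ‖a‖ ^ q * ‖a - b‖ := by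
          gcongr; exact norm_sub_norm_le a b
        linarith
    _ = (1 + q) * ‖a‖ ^ q * ‖a - b‖ := by ring

lemma lipschitzOnWith_rpow_smul {q : ℝ} (hq : 0 ≤ q) (R : ℝ) :
    LipschitzOnWith (Real.toNNReal ((1 + q) * R ^ q)) (fun y : E => ‖y‖ ^ q • y)
      (closedBall 0 R) := by
  refine LipschitzOnWith.of_dist_le_mul fun a ha b hb => ?_
  rw [mem_closedBall_zero_iff] at ha hb
  rw [dist_eq_norm, dist_eq_norm]
  refine le_trans ?_ (mul_le_mul_of_nonneg_right (Real.le_coe_toNNReal _) (norm_nonneg _))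
  rcases le_total ‖b‖ ‖a‖ with hba | hab
  · refine (norm_rpow_smul_sub_rpow_smul_le_of_norm_le hq hba).trans ?_
    gcongr
  · rw [norm_sub_rev, norm_sub_rev a b]
    refine (norm_rpow_smul_sub_rpow_smul_le_of_norm_le hq hab).trans ?_
    gcongr

end RpowSMul

lemma exists_norm_le_of_lipschitzOnWith {H : Type*} [NormedAddCommGroup H] {F : ℝ → H → H}
    {T R : ℝ} {K : ℝ≥0}
    (hcont : ContinuousOn (F · 0) (Icc 0 T))
    (hlip : ∀ t ∈ Icc 0 T, LipschitzOnWith K (F t) (closedBall 0 R)) :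
    ∃ M ≥ 0, ∀ t ∈ Icc 0 T, ∀ x ∈ closedBall (0 : H) R, ‖F t x‖ ≤ M := by
  obtain ⟨C, hC⟩ := isCompact_Icc.exists_bound_of_continuousOn hcont
  refine ⟨|C| + K * |R|, by positivity, fun t ht x hx => ?_⟩
  have hR : 0 ≤ R := nonneg_of_mem_closedBall hx
  have hlipx := (hlip t ht).norm_sub_le hx (mem_closedBall_self hR)
  rw [sub_zero] at hlipx
  have : ↑K * ‖x‖ ≤ K * |R| := by
    gcongr; exact (mem_closedBall_zero_iff.1 hx).trans (le_abs_self _)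
  linarith [norm_le_insert' (F t x) (F t 0), hC t ht, le_abs_self C]

section Continuation

variable {H : Type*} [NormedAddCommGroup H] [NormedSpace ℝ H] {F : ℝ → H → H}

lemma isIntegralCurveOn_singleton (γ : ℝ → H) (t₀ : ℝ) : IsIntegralCurveOn γ F {t₀} := by
  rintro t rfl
  exact HasFDerivWithinAt.of_not_accPt (by rw [accPt_principal_iff_nhdsWithin]; simp)

lemma IsIntegralCurveOn.hasDerivWithinAt_Ici {γ : ℝ → H} {a b t : ℝ}
    (hγ : IsIntegralCurveOn γ F (Icc a b)) (ht : t ∈ Ico a b) :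
    HasDerivWithinAt γ (F t (γ t)) (Ici t) t :=
  (hγ t (Ico_subset_Icc_self ht)).mono_of_mem_nhdsWithin (Icc_mem_nhdsGE_of_mem ht)

lemma IsIntegralCurveOn.piecewise_Icc {X Z : ℝ → H} {a b c : ℝ}
    (hX : IsIntegralCurveOn X F (Icc a b)) (hZ : IsIntegralCurveOn Z F (Icc b c))
    (hXZ : X b = Z b) :
    IsIntegralCurveOn (fun t => if t ≤ b then X t else Z t) F (Icc a c) := by
  set W : ℝ → H := fun t => if t ≤ b then X t else Z t
  have hWX : EqOn W X (Icc a c ∩ Iic b) := fun s hs => if_pos hs.2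
  have hWZ : EqOn W Z (Icc a c ∩ Ici b) := fun s hs => by
    rcases (mem_Ici.1 hs.2).eq_or_lt with rfl | h
    · simp [W, hXZ]
    · exact if_neg h.not_ge
  intro t ht
  -- on the side of `b` that does not contain `t`, the derivative condition is vacuous
  have left : HasDerivWithinAt W (F t (W t)) (Icc a c ∩ Iic b) t := by
    by_cases htb : t ≤ b
    · rw [hWX ⟨ht, htb⟩]
      exact ((hX t ⟨ht.1, htb⟩).mono fun s hs => ⟨hs.1.1, hs.2⟩).congr hWX (hWX ⟨ht, htb⟩)
    · exact HasFDerivWithinAt.of_notMem_closure fun h =>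
        htb (closure_minimal inter_subset_right isClosed_Iic h)
  have right : HasDerivWithinAt W (F t (W t)) (Icc a c ∩ Ici b) t := by
    by_cases hbt : b ≤ t
    · rw [hWZ ⟨ht, hbt⟩]
      exact ((hZ t ⟨hbt, ht.2⟩).mono fun s hs => ⟨hs.2, hs.1.2⟩).congr hWZ (hWZ ⟨ht, hbt⟩)
    · exact HasFDerivWithinAt.of_notMem_closure fun h =>
        hbt (closure_minimal inter_subset_right isClosed_Ici h)
  simpa [← inter_union_distrib_left] using left.union right

lemma exists_pos_forall_exists_isIntegralCurveOn_Icc [CompleteSpace H] {T T' R : ℝ} {K : ℝ≥0}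
    (hTT' : T < T') (hcont : ∀ x, ContinuousOn (F · x) (Icc 0 T'))
    (hlip : ∀ t ∈ Icc 0 T', LipschitzOnWith K (F t) (closedBall 0 (R + 1))) :
    ∃ ε > 0, ∀ t₀ ∈ Icc 0 T, ∀ z ∈ closedBall (0 : H) R,
      ∃ Z : ℝ → H, Z t₀ = z ∧ IsIntegralCurveOn Z F (Icc t₀ (t₀ + ε)) := by
  obtain ⟨M, hM0, hM⟩ := exists_norm_le_of_lipschitzOnWith (hcont 0) hlip
  refine ⟨min (T' - T) (1 / (M + 1)), lt_min (by linarith) (by positivity), ?_⟩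
  intro t₀ ht₀ z hz
  set ε := min (T' - T) (1 / (M + 1))
  have hε : 0 ≤ ε := le_min (by linarith) (by positivity)
  have hsub : Icc t₀ (t₀ + ε) ⊆ Icc 0 T' := fun s hs =>
    ⟨ht₀.1.trans hs.1, by linarith [hs.2, ht₀.2, min_le_left (T' - T) (1 / (M + 1))]⟩
  have hball : closedBall z ((1 : ℝ≥0) : ℝ) ⊆ closedBall 0 (R + 1) := by
    refine closedBall_subset_closedBall' ?_
    rw [dist_zero_right, NNReal.coe_one]
    linarith [mem_closedBall_zero_iff.1 hz]
  have hPL : IsPicardLindelof F (tmin := t₀) (tmax := t₀ + ε)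
      ⟨t₀, left_mem_Icc.2 (by linarith)⟩ z 1 0 M.toNNReal K :=
    { lipschitzOnWith := fun t ht => (hlip t (hsub ht)).mono hball
      continuousOn := fun x _ => (hcont x).mono hsub
      norm_le := fun t ht x hx => (hM t (hsub ht) x (hball hx)).trans (Real.le_coe_toNNReal M)
      mul_max_le := by
        show (M.toNNReal : ℝ) * max (t₀ + ε - t₀) (t₀ - t₀) ≤ ((1 : ℝ≥0) : ℝ) - ((0 : ℝ≥0) : ℝ)
        rw [Real.coe_toNNReal M hM0, add_sub_cancel_left, sub_self, max_eq_left hε,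
          NNReal.coe_one, NNReal.coe_zero, sub_zero]
        calc M * ε ≤ M * (1 / (M + 1)) := by gcongr; exact min_le_right _ _
          _ ≤ 1 := by rw [mul_one_div, div_le_one (by linarith)]; linarith }
  exact hPL.exists_eq_forall_mem_Icc_hasDerivWithinAt₀

variable {T₀ : ℝ} {x₀ : H}
  (hlip : ∀ T < T₀, ∀ R, ∃ K : ℝ≥0, ∀ t ∈ Icc 0 T, LipschitzOnWith K (F t) (closedBall 0 R))
  (hbound : ∀ T < T₀, ∃ R, ∀ τ ∈ Icc 0 T, ∀ X : ℝ → H,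
    X 0 = x₀ → IsIntegralCurveOn X F (Icc 0 τ) → ‖X τ‖ ≤ R)
include hlip hbound

lemma exists_isIntegralCurveOn_Icc_of_bounded [CompleteSpace H]
    (hcont : ∀ x, ContinuousOn (F · x) (Ico 0 T₀)) {T : ℝ} (hT : T ∈ Ico 0 T₀) :
    ∃ X : ℝ → H, X 0 = x₀ ∧ IsIntegralCurveOn X F (Icc 0 T) := by
  obtain ⟨T', hTT', hT'⟩ := exists_between hT.2
  obtain ⟨R, hR⟩ := hbound T' hT'
  obtain ⟨K, hK⟩ := hlip T' hT' (R + 1)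
  obtain ⟨ε, hε, hstep⟩ := exists_pos_forall_exists_isIntegralCurveOn_Icc hTT'
    (fun x => (hcont x).mono (Icc_subset_Ico_right hT')) hK
  -- march forward in steps of length `ε`, restarting from the a priori bounded endpoint
  have hmarch : ∀ k : ℕ, ∃ X : ℝ → H, X 0 = x₀ ∧ IsIntegralCurveOn X F (Icc 0 (min T (k * ε))) := by
    intro k
    induction k with
    | zero => exact ⟨fun _ => x₀, rfl, by simpa [hT.1] using isIntegralCurveOn_singleton _ 0⟩
    | succ k ih =>
      obtain ⟨X, hX0, hX⟩ := ih
      set τ := min T (k * ε)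
      have hτ : τ ∈ Icc 0 T := ⟨le_min hT.1 (by positivity), min_le_left _ _⟩
      obtain ⟨Z, hZτ, hZ⟩ := hstep τ hτ (X τ)
        (mem_closedBall_zero_iff.2 (hR τ ⟨hτ.1, hτ.2.trans hTT'.le⟩ X hX0 hX))
      refine ⟨_, by simp [hX0, hτ.1], (hX.piecewise_Icc hZ hZτ.symm).mono
        (Icc_subset_Icc_right ?_)⟩
      calc min T (↑(k + 1) * ε) ≤ min (T + ε) (k * ε + ε) :=
            min_le_min (by linarith) (by push_cast; linarith)
        _ = τ + ε := min_add_add_right _ _ _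
  obtain ⟨k, hk⟩ := exists_nat_ge (T / ε)
  simpa [min_eq_left ((div_le_iff₀ hε).1 hk)] using hmarch k

lemma eqOn_of_isIntegralCurveOn_Icc {T : ℝ} (hT : T < T₀) {X Y : ℝ → H}
    (hX0 : X 0 = x₀) (hX : IsIntegralCurveOn X F (Icc 0 T))
    (hY0 : Y 0 = x₀) (hY : IsIntegralCurveOn Y F (Icc 0 T)) : EqOn X Y (Icc 0 T) := by
  obtain ⟨R, hR⟩ := hbound T hT
  obtain ⟨K, hK⟩ := hlip T hT R
  have hball : ∀ Z : ℝ → H, Z 0 = x₀ → IsIntegralCurveOn Z F (Icc 0 T) →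
      ∀ t ∈ Ico 0 T, Z t ∈ closedBall 0 R := fun Z hZ0 hZ t ht =>
    mem_closedBall_zero_iff.2
      (hR t ⟨ht.1, ht.2.le⟩ Z hZ0 (hZ.mono (Icc_subset_Icc_right ht.2.le)))
  exact ODE_solution_unique_of_mem_Icc_right (s := fun _ => closedBall 0 R)
    (fun t ht => hK t (Ico_subset_Icc_self ht))
    hX.continuousOn (fun t ht => hX.hasDerivWithinAt_Ici ht) (hball X hX0 hX)
    hY.continuousOn (fun t ht => hY.hasDerivWithinAt_Ici ht) (hball Y hY0 hY)
    (hX0.trans hY0.symm)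

theorem exists_isIntegralCurveOn_Ico_of_bounded [CompleteSpace H] (hT₀ : 0 < T₀)
    (hcont : ∀ x, ContinuousOn (F · x) (Ico 0 T₀)) :
    ∃ X : ℝ → H, X 0 = x₀ ∧ IsIntegralCurveOn X F (Ico 0 T₀) := by
  choose! X hX0 hX using fun T (hT : T ∈ Ico 0 T₀) =>
    exists_isIntegralCurveOn_Icc_of_bounded hlip hbound hcont hT
  -- at time `t` use the solution on `[0, (t + T₀) / 2]`, which lives on a neighbourhood of `t`
  set m : ℝ → ℝ := fun t => (t + T₀) / 2
  have hm : ∀ t ∈ Ico 0 T₀, m t ∈ Ico 0 T₀ ∧ t < m t := fun t ⟨ht0, htT₀⟩ => by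
    simp only [m, mem_Ico]
    exact ⟨⟨by linarith, by linarith⟩, by linarith⟩
  have hagree : ∀ T ∈ Ico 0 T₀, ∀ t ∈ Ico 0 T₀, t ≤ T → X (m t) t = X T t := by
    intro T hT t ht htT
    have hmin : min (m t) T < T₀ := (min_le_right _ _).trans_lt hT.2
    exact eqOn_of_isIntegralCurveOn_Icc hlip hbound hmin
      (hX0 _ (hm t ht).1) ((hX _ (hm t ht).1).mono (Icc_subset_Icc_right (min_le_left _ _)))
      (hX0 T hT) ((hX T hT).mono (Icc_subset_Icc_right (min_le_right _ _)))
      ⟨ht.1, le_min (hm t ht).2.le htT⟩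
  refine ⟨fun t => X (m t) t, hX0 _ (hm 0 ⟨le_rfl, hT₀⟩).1, fun t ht => ?_⟩
  obtain ⟨hmt, htm⟩ := hm t ht
  have hd := ((hX (m t) hmt t ⟨ht.1, htm.le⟩).mono
    (fun s hs => ⟨hs.1.1, hs.2⟩ : Ico 0 T₀ ∩ Iic (m t) ⊆ Icc 0 (m t))).congr
    (fun s hs => hagree (m t) hmt s hs.1 hs.2) (hagree (m t) hmt t ht htm.le)
  rw [← hagree (m t) hmt t ht htm.le] at hd
  exact hd.mono_of_mem_nhdsWithin (inter_mem_nhdsWithin _ (Iic_mem_nhds htm))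

end Continuation

section ProdDeriv

variable {E F : Type*} [NormedAddCommGroup E] [NormedSpace ℝ E] [NormedAddCommGroup F]
  [NormedSpace ℝ F] {f : ℝ → E × F} {f' : E × F} {s : Set ℝ} {t : ℝ}

lemma HasDerivWithinAt.fst (h : HasDerivWithinAt f f' s t) :
    HasDerivWithinAt (fun t => (f t).1) f'.1 s t :=
  (ContinuousLinearMap.fst ℝ E F).hasFDerivAt.comp_hasDerivWithinAt t h

lemma HasDerivWithinAt.snd (h : HasDerivWithinAt f f' s t) :
    HasDerivWithinAt (fun t => (f t).2) f'.2 s t :=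
  (ContinuousLinearMap.snd ℝ E F).hasFDerivAt.comp_hasDerivWithinAt t h

end ProdDeriv

section OscillatorField

variable {E : Type*} [NormedAddCommGroup E] {A : ℝ → ℝ} {lam p : ℝ}

/-- The last term is `2 lam ‖y‖^(p+1) / (p+1)`, written through `‖y‖²` to make it visibly
differentiable at `y = 0`. -/
noncomputable def oscillatorEnergy (A : ℝ → ℝ) (lam p t : ℝ) (x : E × E) : ℝ :=
  ‖x.2‖ ^ 2 + A t * ‖x.1‖ ^ 2 + 2 * lam / (p + 1) * (‖x.1‖ ^ 2) ^ ((p + 1) / 2)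

lemma oscillatorEnergy_ge (hlam : 0 ≤ lam) (hp : 1 ≤ p) (t : ℝ) (x : E × E) :
    ‖x.2‖ ^ 2 + A t * ‖x.1‖ ^ 2 ≤ oscillatorEnergy A lam p t x := by
  have : 0 ≤ 2 * lam / (p + 1) * (‖x.1‖ ^ 2) ^ ((p + 1) / 2) := by
    have : 0 < p + 1 := by linarith
    positivity
  unfold oscillatorEnergy
  linarith

lemma norm_sq_le_of_oscillatorEnergy_div_le (hlam : 0 ≤ lam) (hp : 1 ≤ p) {t M : ℝ}
    {x : E × E} (hA : 0 < A t) (hM : oscillatorEnergy A lam p t x / A t ≤ M) :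
    ‖x‖ ^ 2 ≤ M * max 1 (A t) := by
  rw [div_le_iff₀ hA] at hM
  have hE := oscillatorEnergy_ge (A := A) hlam hp t x
  have hy : ‖x.1‖ ^ 2 ≤ M := le_of_mul_le_mul_left (by nlinarith [sq_nonneg ‖x.2‖]) hA
  have hM0 : 0 ≤ M := (sq_nonneg _).trans hy
  have hv : ‖x.2‖ ^ 2 ≤ M * A t := by nlinarith [sq_nonneg ‖x.1‖]
  rw [Prod.norm_def]
  rcases max_cases ‖x.1‖ ‖x.2‖ with ⟨h, -⟩ | ⟨h, -⟩ <;> rw [h]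
  · nlinarith [le_max_left 1 (A t)]
  · nlinarith [le_max_right 1 (A t)]

variable [NormedSpace ℝ E]

/-- The equation `y'' + A(t) y + lam ‖y‖^(p-1) y = 0` as a first-order system in `(y, y')`. -/
noncomputable def oscillatorField (A : ℝ → ℝ) (lam p t : ℝ) (x : E × E) : E × E :=
  (x.2, -(A t • x.1) - (lam * ‖x.1‖ ^ (p - 1)) • x.1)

lemma continuousOn_oscillatorField {s : Set ℝ} (hA : ContinuousOn A s) (x : E × E) :
    ContinuousOn (oscillatorField A lam p · x) s :=
  continuousOn_const.prodMk ((hA.smul continuousOn_const).neg.sub continuousOn_const)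

lemma lipschitzOnWith_oscillatorField (hp : 1 ≤ p) (t R : ℝ) :
    LipschitzOnWith (max 1 (‖A t‖₊ + ‖lam‖₊ * Real.toNNReal (p * R ^ (p - 1))))
      (oscillatorField A lam p t) (closedBall (0 : E × E) R) := by
  have hforce := (lipschitzWith_smul (A t)).lipschitzOnWith.neg.sub
    ((lipschitzWith_smul lam).comp_lipschitzOnWith
      (lipschitzOnWith_rpow_smul (E := E) (sub_nonneg.2 hp) R))
  have hfst : MapsTo Prod.fst (closedBall (0 : E × E) R) (closedBall 0 R) := fun x hx => by
    simpa using (norm_fst_le x).trans (mem_closedBall_zero_iff.1 hx)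
  convert LipschitzWith.prod_snd.lipschitzOnWith.prodMk
    (hforce.comp LipschitzWith.prod_fst.lipschitzOnWith hfst) using 1
  · simp
  · ext x <;> simp [oscillatorField, mul_smul]

lemma exists_lipschitzOnWith_oscillatorField (hp : 1 ≤ p) {T : ℝ}
    (hA : ContinuousOn A (Icc 0 T)) (R : ℝ) :
    ∃ K, ∀ t ∈ Icc 0 T,
      LipschitzOnWith K (oscillatorField A lam p t) (closedBall (0 : E × E) R) := by
  obtain ⟨C, hC⟩ := isCompact_Icc.exists_bound_of_continuousOn hA
  refine ⟨max 1 (C.toNNReal + ‖lam‖₊ * Real.toNNReal (p * R ^ (p - 1))),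
    fun t ht => (lipschitzOnWith_oscillatorField hp t R).weaken ?_⟩
  gcongr
  rw [← NNReal.coe_le_coe, coe_nnnorm]
  exact (hC t ht).trans (Real.le_coe_toNNReal C)

end OscillatorField

section Energy

variable {E : Type*} [NormedAddCommGroup E] [InnerProductSpace ℝ E] {A : ℝ → ℝ} {lam p : ℝ}
  {X : ℝ → E × E}

lemma HasDerivWithinAt.oscillatorEnergy {s : Set ℝ} {t a' : ℝ} (hp : 1 ≤ p)
    (hX : HasDerivWithinAt X (oscillatorField A lam p t (X t)) s t)
    (hA : HasDerivWithinAt A a' s t) :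
    HasDerivWithinAt (fun t => oscillatorEnergy A lam p t (X t)) (a' * ‖(X t).1‖ ^ 2) s t := by
  have hy := hX.fst.norm_sq
  have hpot := hy.rpow_const (p := (p + 1) / 2) (Or.inr (by linarith))
  refine ((hX.snd.norm_sq.add (hA.mul hy)).add (hpot.const_mul _)).congr_deriv ?_
  have hpow : (‖(X t).1‖ ^ 2) ^ ((p + 1) / 2 - 1) = ‖(X t).1‖ ^ (p - 1) := by
    rw [← Real.rpow_natCast, ← Real.rpow_mul (norm_nonneg _)]
    ring_nf
  simp only [oscillatorField, hpow, inner_sub_right, inner_neg_right, real_inner_smul_right,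
    real_inner_comm (X t).2]
  field_simp
  ring

lemma antitoneOn_oscillatorEnergy_div {a b : ℝ} (hlam : 0 ≤ lam) (hp : 1 ≤ p)
    (hX : IsIntegralCurveOn X (oscillatorField A lam p) (Icc a b))
    (hA : ∀ t ∈ Icc a b, DifferentiableAt ℝ A t) (hA_pos : ∀ t ∈ Icc a b, 0 < A t)
    (hA' : ∀ t ∈ Icc a b, 0 ≤ deriv A t) :
    AntitoneOn (fun t => oscillatorEnergy A lam p t (X t) / A t) (Icc a b) := by
  have hE : ∀ t ∈ Icc a b, HasDerivWithinAt (fun t => oscillatorEnergy A lam p t (X t) / A t)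
      ((deriv A t * ‖(X t).1‖ ^ 2 * A t - oscillatorEnergy A lam p t (X t) * deriv A t) /
        A t ^ 2) (Icc a b) t := fun t ht =>
    ((hX t ht).oscillatorEnergy hp (hA t ht).hasDerivAt.hasDerivWithinAt).div
      (hA t ht).hasDerivAt.hasDerivWithinAt (hA_pos t ht).ne'
  refine antitoneOn_of_hasDerivWithinAt_nonpos (convex_Icc a b)
    (fun t ht => (hE t ht).continuousWithinAt)
    (fun t ht => (hE t (interior_subset ht)).mono interior_subset) fun t ht => ?_
  replace ht := interior_subset ht
  refine div_nonpos_of_nonpos_of_nonneg ?_ (sq_nonneg _)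
  have hE : A t * ‖(X t).1‖ ^ 2 ≤ oscillatorEnergy A lam p t (X t) := by
    linarith [oscillatorEnergy_ge (A := A) hlam hp t (X t), sq_nonneg ‖(X t).2‖]
  nlinarith [mul_le_mul_of_nonneg_left hE (hA' t ht)]

theorem exists_isIntegralCurveOn_oscillatorField [CompleteSpace E] {T₀ : ℝ}
    (hT₀ : 0 < T₀) (hlam : 0 ≤ lam) (hp : 1 ≤ p)
    (hA : ∀ t ∈ Ico 0 T₀, DifferentiableAt ℝ A t) (hA_pos : ∀ t ∈ Ico 0 T₀, 0 < A t)
    (hA' : ∀ t ∈ Ico 0 T₀, 0 ≤ deriv A t) (x₀ : E × E) :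
    ∃ X : ℝ → E × E, X 0 = x₀ ∧ IsIntegralCurveOn X (oscillatorField A lam p) (Ico 0 T₀) := by
  have hAc : ContinuousOn A (Ico 0 T₀) := fun t ht => (hA t ht).continuousAt.continuousWithinAt
  refine exists_isIntegralCurveOn_Ico_of_bounded (fun T hT R => ?_) (fun T hT => ?_) hT₀
    (continuousOn_oscillatorField hAc)
  · exact exists_lipschitzOnWith_oscillatorField hp (hAc.mono (Icc_subset_Ico_right hT)) R
  have hsub : Icc 0 T ⊆ Ico 0 T₀ := Icc_subset_Ico_right hT
  have hAmono : MonotoneOn A (Icc 0 T) := monotoneOn_of_hasDerivWithinAt_nonneg (convex_Icc 0 T)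
    (hAc.mono hsub)
    (fun t ht => (hA t (hsub (interior_subset ht))).hasDerivAt.hasDerivWithinAt)
    (fun t ht => hA' t (hsub (interior_subset ht)))
  refine ⟨√(oscillatorEnergy A lam p 0 x₀ / A 0 * max 1 (A T)), fun τ hτ X hX0 hX => ?_⟩
  have hτT : Icc 0 τ ⊆ Icc 0 T := Icc_subset_Icc_right hτ.2
  have hdecay := antitoneOn_oscillatorEnergy_div hlam hp hX (fun t ht => hA t (hsub (hτT ht)))
    (fun t ht => hA_pos t (hsub (hτT ht))) (fun t ht => hA' t (hsub (hτT ht)))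
    (left_mem_Icc.2 hτ.1) (right_mem_Icc.2 hτ.1) hτ.1
  have h0 : (0 : ℝ) ∈ Ico 0 T₀ := hsub (left_mem_Icc.2 (hτ.1.trans hτ.2))
  have hE0 : 0 ≤ oscillatorEnergy A lam p 0 (X 0) / A 0 := by
    have := (hA_pos 0 h0).le
    exact div_nonneg ((by positivity : (0 : ℝ) ≤ ‖(X 0).2‖ ^ 2 + A 0 * ‖(X 0).1‖ ^ 2).trans
      (oscillatorEnergy_ge hlam hp 0 (X 0))) this
  rw [← hX0, ← abs_norm]
  refine Real.abs_le_sqrt ((norm_sq_le_of_oscillatorEnergy_div_le hlam hp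
    (hA_pos τ (hsub hτ)) hdecay).trans ?_)
  exact mul_le_mul_of_nonneg_left (max_le_max le_rfl
    (hAmono hτ ⟨hτ.1.trans hτ.2, le_rfl⟩ hτ.2)) hE0

end Energy

section PowerLawScale

variable {n : ℕ} {σ a₀ a₁ ν c t : ℝ}

lemma scaleFun_of_ne_neg_one (hσ : σ ≠ -1) :
    scaleFun n σ a₀ a₁ = fun t =>
      a₀ * (1 + n * (1 + σ) * a₁ / (2 * a₀) * t) ^ (2 / (n * (1 + σ))) := by
  ext t
  rw [scaleFun, if_neg hσ, mul_div_right_comm _ t]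

lemma eventually_pos_one_add_mul (ht : 0 < 1 + c * t) : ∀ᶠ s in 𝓝 t, 0 < 1 + c * s :=
  (continuous_const.add (continuous_const.mul continuous_id)).continuousAt.eventually
    (eventually_gt_nhds ht)

lemma hasDerivAt_one_add_mul (t : ℝ) : HasDerivAt (fun s => 1 + c * s) c t := by
  simpa using ((hasDerivAt_id t).const_mul c).const_add 1

variable (hscale : scaleFun n σ a₀ a₁ = fun t => a₀ * (1 + c * t) ^ (2 / ν))
include hscale

lemma scaleFun_sq_eq (ht : 0 < 1 + c * t) :
    scaleFun n σ a₀ a₁ t ^ 2 = a₀ ^ 2 * (1 + c * t) ^ (4 / ν) := by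
  rw [hscale, mul_pow, ← Real.rpow_mul_natCast ht.le]
  ring_nf

lemma hasDerivAt_scaleFun_sq (ht : 0 < 1 + c * t) :
    HasDerivAt (fun s => scaleFun n σ a₀ a₁ s ^ 2)
      (a₀ ^ 2 * (4 / ν * (1 + c * t) ^ (4 / ν - 1) * c)) t := by
  refine (((Real.hasDerivAt_rpow_const (Or.inl ht.ne')).comp t
    (hasDerivAt_one_add_mul t)).const_mul (a₀ ^ 2)).congr_of_eventuallyEq ?_
  filter_upwards [eventually_pos_one_add_mul ht] with s hs
  exact scaleFun_sq_eq hscale hs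

lemma q0Fun_eq (ha₀ : a₀ ≠ 0) (ht : 0 < 1 + c * t) :
    q0Fun n σ a₀ a₁ t = 4 / ν * c / (1 + c * t) := by
  rw [q0Fun, (hasDerivAt_scaleFun_sq hscale ht).deriv, scaleFun_sq_eq hscale ht,
    Real.rpow_sub_one ht.ne']
  have := (Real.rpow_pos_of_pos ht (4 / ν)).ne'
  field_simp

lemma hasDerivAt_q0Fun (ha₀ : a₀ ≠ 0) (ht : 0 < 1 + c * t) :
    HasDerivAt (q0Fun n σ a₀ a₁) (-(4 / ν * c ^ 2) / (1 + c * t) ^ 2) t := by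
  refine (((hasDerivAt_const t (4 / ν * c)).div (hasDerivAt_one_add_mul t)
    ht.ne').congr_deriv (by ring)).congr_of_eventuallyEq ?_
  filter_upwards [eventually_pos_one_add_mul ht] with s hs
  exact q0Fun_eq hscale ha₀ hs

lemma AFun_eq (ha₀ : a₀ ≠ 0) (ht : 0 < 1 + c * t) :
    AFun n σ a₀ a₁ t = 2 * (ν - 2) * c ^ 2 / ν ^ 2 / (1 + c * t) ^ 2 := by
  rw [AFun, q0Fun_eq hscale ha₀ ht, (hasDerivAt_q0Fun hscale ha₀ ht).deriv]
  rcases eq_or_ne ν 0 with rfl | hν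
  · simp
  field_simp
  ring

lemma hasDerivAt_AFun (ha₀ : a₀ ≠ 0) (ht : 0 < 1 + c * t) :
    HasDerivAt (AFun n σ a₀ a₁) (4 * (2 - ν) * c ^ 3 / ν ^ 2 / (1 + c * t) ^ 3) t := by
  have hsq : HasDerivAt (fun s => (1 + c * s) ^ 2) (2 * (1 + c * t) * c) t := by
    simpa using (hasDerivAt_one_add_mul t).fun_pow 2
  refine (((hasDerivAt_const t (2 * (ν - 2) * c ^ 2 / ν ^ 2)).div hsq
    (pow_ne_zero 2 ht.ne')).congr_deriv ?_).congr_of_eventuallyEq ?_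
  · rcases eq_or_ne ν 0 with rfl | hν
    · simp
    field_simp
    ring
  · filter_upwards [eventually_pos_one_add_mul ht] with s hs
    exact AFun_eq hscale ha₀ hs

lemma AFun_pos (ha₀ : a₀ ≠ 0) (hν : 2 < ν) (hc : c ≠ 0) (ht : 0 < 1 + c * t) :
    0 < AFun n σ a₀ a₁ t := by
  rw [AFun_eq hscale ha₀ ht]
  have : 0 < ν - 2 := by linarith
  positivity

lemma deriv_AFun_nonneg (ha₀ : a₀ ≠ 0) (hν : 2 ≤ ν) (hc : c ≤ 0) (ht : 0 < 1 + c * t) :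
    0 ≤ deriv (AFun n σ a₀ a₁) t := by
  rw [(hasDerivAt_AFun hscale ha₀ ht).deriv]
  have : 0 ≤ (2 - ν) * c ^ 3 :=
    mul_nonneg_of_nonpos_of_nonpos (by linarith) (Odd.pow_nonpos (by decide) hc)
  rw [mul_assoc]
  positivity

end PowerLawScale

/-- Case (iv): `a₁ < 0`, `σ > -1 + 2/n` (so `T₁ = T₀ = -2a₀/(n(1+σ)a₁) > 0`), `λ ≥ 0`.
Global existence of a `C¹` solution of `D_t²Y + A(t)Y + λ|Y|^{p-1}Y = 0` on `[0, T₀)`. -/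
theorem stmt_7 (n : ℕ) (hn : 1 ≤ n) (σ a₀ a₁ lam p : ℝ)
    (ha₀ : 0 < a₀) (ha₁ : a₁ < 0) (hσ : -1 + 2 / (n : ℝ) < σ) (hp : 1 < p)
    (hlam : 0 ≤ lam)
    (Y₀ Y₁ : EuclideanSpace ℝ (Fin n)) :
    ∃ Y Y' : ℝ → EuclideanSpace ℝ (Fin n),
      (∀ t ∈ Ico (0 : ℝ) (-(2 * a₀) / ((n : ℝ) * (1 + σ) * a₁)),
        HasDerivWithinAt Y (Y' t) (Ico (0 : ℝ) (-(2 * a₀) / ((n : ℝ) * (1 + σ) * a₁))) t) ∧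
      (∀ t ∈ Ico (0 : ℝ) (-(2 * a₀) / ((n : ℝ) * (1 + σ) * a₁)),
        HasDerivWithinAt Y'
          (-(AFun n σ a₀ a₁ t • Y t) - (lam * ‖Y t‖ ^ (p - 1)) • Y t)
          (Ico (0 : ℝ) (-(2 * a₀) / ((n : ℝ) * (1 + σ) * a₁))) t) ∧
      ContinuousOn Y' (Ico (0 : ℝ) (-(2 * a₀) / ((n : ℝ) * (1 + σ) * a₁))) ∧
      Y 0 = Y₀ ∧ Y' 0 = Y₁ := by
  set ν : ℝ := n * (1 + σ)
  have hν : 2 < ν := by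
    have hn0 : (0 : ℝ) < n := by exact_mod_cast hn
    have := (div_lt_iff₀ hn0).1 (show 2 / (n : ℝ) < 1 + σ by linarith)
    linarith
  have hνa₁ : ν * a₁ < 0 := mul_neg_of_pos_of_neg (by linarith) ha₁
  set c := ν * a₁ / (2 * a₀)
  have hc : c < 0 := div_neg_of_neg_of_pos hνa₁ (by linarith)
  have hscale : scaleFun n σ a₀ a₁ = fun t => a₀ * (1 + c * t) ^ (2 / ν) :=
    scaleFun_of_ne_neg_one fun hσ => by simp [ν, hσ] at hν; linarith
  set T₀ := -(2 * a₀) / (ν * a₁)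
  have hpos : ∀ t ∈ Ico 0 T₀, 0 < 1 + c * t := fun t ht => by
    have := (lt_div_iff_of_neg hνa₁).1 ht.2
    rw [show 1 + c * t = (2 * a₀ + ν * a₁ * t) / (2 * a₀) by simp only [c]; field_simp]
    exact div_pos (by linarith) (by linarith)
  have hT₀ : 0 < T₀ := div_pos_of_neg_of_neg (by linarith) hνa₁
  obtain ⟨X, hX0, hX⟩ := exists_isIntegralCurveOn_oscillatorField hT₀ hlam hp.le
    (fun t ht => (hasDerivAt_AFun hscale ha₀.ne' (hpos t ht)).differentiableAt)
    (fun t ht => AFun_pos hscale ha₀.ne' hν hc.ne (hpos t ht))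
    (fun t ht => deriv_AFun_nonneg hscale ha₀.ne' hν.le hc.le (hpos t ht)) (Y₀, Y₁)
  exact ⟨fun t => (X t).1, fun t => (X t).2, fun t ht => (hX t ht).fst, fun t ht => (hX t ht).snd,
    continuous_snd.comp_continuousOn hX.continuousOn, congrArg Prod.fst hX0, congrArg Prod.snd hX0⟩
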